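/- (Log-partition value of the optimal machine policy; the paper's Lemma used to make the step-dependent constraint well-defined.) Let P̂ be a human model, r a reward function, γ > 0, and let Q̂ be the machine policy obtained from the Y_γ backward recursion. Then E_{P̂Q̂}[−log Q̂(M^T‖H^T) + γ·r(H^T,M^T)] = log Σ_{m_1∈𝓜} Y_γ(m_1); i.e., the entropy-regularized expected reward of Q̂ under P̂ equals the logarithm of the partition value of the recursion. -/

import Mathlib

/-! Common framework: finite-horizon human–machine interaction processes.
Times are 0-indexed: step `t : Fin T` corresponds to the paper's step `t+1`.
A human model gives conditional PMFs `P(h_t | h^{t-1}, m^t)`: the value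
`p t h m a` may depend only on `h s` for `s < t`, on `m s` for `s ≤ t`, and on `a`.
A machine policy gives conditional PMFs `Q(m_t | h^{t-1}, m^{t-1})`: the value
`q t h m b` may depend only on `h s`, `m s` for `s < t`, and on `b`. -/

structure HumanModel (T : ℕ) (H M : Type*) [Fintype H] where
  p : Fin T → (Fin T → H) → (Fin T → M) → H → ℝ
  causal : ∀ (t : Fin T) (h h' : Fin T → H) (m m' : Fin T → M),
      (∀ s, s < t → h s = h' s) → (∀ s, s ≤ t → m s = m' s) → p t h m = p t h' m'
  nonneg : ∀ t h m a, 0 ≤ p t h m a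
  sum_one : ∀ t h m, ∑ a, p t h m a = 1

structure MachinePolicy (T : ℕ) (H M : Type*) [Fintype M] where
  q : Fin T → (Fin T → H) → (Fin T → M) → M → ℝ
  causal : ∀ (t : Fin T) (h h' : Fin T → H) (m m' : Fin T → M),
      (∀ s, s < t → h s = h' s) → (∀ s, s < t → m s = m' s) → q t h m = q t h' m'
  nonneg : ∀ t h m b, 0 ≤ q t h m b
  sum_one : ∀ t h m, ∑ b, q t h m b = 1

variable {T : ℕ} {H M : Type*} [Fintype H] [Fintype M]

/-- Causally conditioned distribution of the human: `P(h^T ‖ m^T)`. -/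
noncomputable def HumanModel.cc (P : HumanModel T H M) (h : Fin T → H) (m : Fin T → M) : ℝ :=
  ∏ t, P.p t h m (h t)

/-- Causally conditioned distribution of the machine: `Q(m^T ‖ h^T)`. -/
noncomputable def MachinePolicy.cc (Q : MachinePolicy T H M) (h : Fin T → H) (m : Fin T → M) : ℝ :=
  ∏ t, Q.q t h m (m t)

/-- Joint PMF `PQ(h^T, m^T)`. -/
noncomputable def jointPMF (P : HumanModel T H M) (Q : MachinePolicy T H M)
    (h : Fin T → H) (m : Fin T → M) : ℝ :=
  P.cc h m * Q.cc h m

/-- Expectation `E_{PQ}[φ(H^T, M^T)]`. -/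
noncomputable def expVal (P : HumanModel T H M) (Q : MachinePolicy T H M)
    (φ : (Fin T → H) → (Fin T → M) → ℝ) : ℝ :=
  ∑ h : Fin T → H, ∑ m : Fin T → M, jointPMF P Q h m * φ h m

/-- Causally conditioned entropy of the human, `H_{PQ}(H^T ‖ M^T)`. -/
noncomputable def humanEntropy (P : HumanModel T H M) (Q : MachinePolicy T H M) : ℝ :=
  ∑ h : Fin T → H, ∑ m : Fin T → M, jointPMF P Q h m * (- Real.log (P.cc h m))

/-- Causally conditioned entropy of the machine, `H_{PQ}(M^T ‖ H^T)`. -/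
noncomputable def machineEntropy (P : HumanModel T H M) (Q : MachinePolicy T H M) : ℝ :=
  ∑ h : Fin T → H, ∑ m : Fin T → M, jointPMF P Q h m * (- Real.log (Q.cc h m))

lemma idx_lt (T k : ℕ) [NeZero T] : T - 1 - k < T := by
  have := Nat.pos_of_ne_zero (NeZero.ne T); omega

variable [NeZero T]

/-- Backward recursion for `Y_γ(m_t | h^{t-1}, m^{t-1})`, parameterized by fuel
`k = (T-1) - t`. `Yaux P r γ k h m` is `Y_γ(m_t | h^{t-1}, m^{t-1})` at (0-indexed)
step `t = T - 1 - k`, where the current machine action `m_t` is read off as `m t`. -/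
noncomputable def Yaux (P : HumanModel T H M)
    (r : (Fin T → H) → (Fin T → M) → ℝ) (γ : ℝ) :
    ℕ → (Fin T → H) → (Fin T → M) → ℝ
  | 0, h, m =>
      Real.exp (γ * ∑ a : H, P.p ⟨T - 1, idx_lt T 0⟩ h m a *
        r (Function.update h ⟨T - 1, idx_lt T 0⟩ a) m)
  | k + 1, h, m =>
      Real.exp (∑ a : H, P.p ⟨T - 1 - (k + 1), idx_lt T (k + 1)⟩ h m a *
        Real.log (∑ b : M, Yaux P r γ k
          (Function.update h ⟨T - 1 - (k + 1), idx_lt T (k + 1)⟩ a)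
          (Function.update m ⟨T - 1 - k, idx_lt T k⟩ b)))

/-- `Y_γ(m_t | h^{t-1}, m^{t-1})` at step `t`, with `m_t = m t`. -/
noncomputable def Ycond (P : HumanModel T H M)
    (r : (Fin T → H) → (Fin T → M) → ℝ) (γ : ℝ) (t : Fin T)
    (h : Fin T → H) (m : Fin T → M) : ℝ :=
  Yaux P r γ (T - 1 - t.val) h m

/-- `Q` is the optimal machine policy `Q̂` obtained from the `Y_γ` backward recursion:
`Q̂(m_t | h^{t-1}, m^{t-1}) = Y_γ(m_t | h^{t-1}, m^{t-1}) / Y_γ(h^{t-1}, m^{t-1})`. -/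
def IsOptMachine (P : HumanModel T H M)
    (r : (Fin T → H) → (Fin T → M) → ℝ) (γ : ℝ) (Q : MachinePolicy T H M) : Prop :=
  ∀ (t : Fin T) (h : Fin T → H) (m : Fin T → M) (b : M),
    Q.q t h m b = Ycond P r γ t h (Function.update m t b) /
      ∑ b' : M, Ycond P r γ t h (Function.update m t b')

/-! Under `Q̂`, `log Q̂(m_t | ·) = log Y_γ(m_t | ·) − log Y_γ(h^{t-1}, m^{t-1})`, while
`log Y_γ(m_t | ·)` is the `P̂`-average of `log Y_γ(h^t, m^t)`. Hence, by backward induction,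
the conditional expectation of `−log Q̂(M^T‖H^T) + γ·r` given the first `t` steps is the
machine's log-loss on those steps plus `log Y_γ(h^t, m^t)`. At `t = 0` this is the constant
`log Σ_{m_1} Y_γ(m_1)`, and summing out the steps one at a time (the tower property)
identifies it with the unconditional expectation. -/

open Finset Function

def stepFromEnd (T : ℕ) [NeZero T] (k : ℕ) : Fin T :=
  ⟨T - (k + 1), by have := NeZero.pos T; omega⟩

lemma stepFromEnd_eq_mk (k : ℕ) : stepFromEnd T k = ⟨T - 1 - k, idx_lt T k⟩ :=
  Fin.ext (by simp only [stepFromEnd]; omega)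

def initSteps (T k : ℕ) : Finset (Fin T) :=
  univ.filter fun t => t.val + k < T

lemma initSteps_zero {T : ℕ} : initSteps T 0 = univ :=
  filter_true_of_mem fun t _ => t.isLt

lemma initSteps_self {T : ℕ} : initSteps T T = ∅ :=
  filter_false_of_mem fun _ _ => by omega

lemma mem_initSteps_succ {k : ℕ} {t : Fin T} :
    t ∈ initSteps T (k + 1) ↔ t < stepFromEnd T k := by
  simp only [initSteps, mem_filter, mem_univ, true_and, Fin.lt_def, stepFromEnd]
  omega

lemma stepFromEnd_notMem_initSteps_succ (k : ℕ) : stepFromEnd T k ∉ initSteps T (k + 1) :=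
  fun h => (mem_initSteps_succ.mp h).false

lemma initSteps_eq_insert {k : ℕ} (hk : k < T) :
    initSteps T k = insert (stepFromEnd T k) (initSteps T (k + 1)) := by
  ext t
  simp only [initSteps, stepFromEnd, mem_insert, mem_filter, mem_univ, true_and, Fin.ext_iff]
  omega

lemma update_stepFromEnd_eqOn_initSteps {α : Type*} {k : ℕ} (hk : k < T) {f f' : Fin T → α}
    (hf : ∀ s ∈ initSteps T (k + 1), f s = f' s) (x : α) :
    ∀ s ∈ initSteps T k, update f (stepFromEnd T k) x s = update f' (stepFromEnd T k) x s := by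
  intro s hs
  rw [initSteps_eq_insert hk, mem_insert] at hs
  rcases hs with rfl | hs
  · simp only [update_self]
  · have hne := (mem_initSteps_succ.mp hs).ne
    rw [update_of_ne hne, update_of_ne hne, hf s hs]

lemma HumanModel.p_update_self {T : ℕ} {H M : Type*} [Fintype H] (P : HumanModel T H M)
    (t : Fin T) (h : Fin T → H) (m : Fin T → M) (a : H) : P.p t (update h t a) m = P.p t h m :=
  P.causal t _ _ _ _ (fun _ hs => update_of_ne hs.ne _ _) (fun _ _ => rfl)

lemma HumanModel.p_update_of_lt {T : ℕ} {H M : Type*} [Fintype H] (P : HumanModel T H M)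
    {t s : Fin T} (hts : t < s) (h : Fin T → H) (m : Fin T → M) (a : H) (b : M) :
    P.p t (update h s a) (update m s b) = P.p t h m :=
  P.causal t _ _ _ _ (fun _ hu => update_of_ne (hu.trans hts).ne _ _)
    (fun _ hu => update_of_ne (hu.trans_lt hts).ne _ _)

lemma MachinePolicy.q_update_of_le {T : ℕ} {H M : Type*} [Fintype M]
    (Q : MachinePolicy T H M) {t s : Fin T} (hts : t ≤ s)
    (h : Fin T → H) (m : Fin T → M) (a : H) (b : M) :
    Q.q t (update h s a) (update m s b) = Q.q t h m :=
  Q.causal t _ _ _ _ (fun _ hu => update_of_ne (hu.trans_le hts).ne _ _)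
    (fun _ hu => update_of_ne (hu.trans_le hts).ne _ _)

lemma sum_sum_update_eq_card_mul {α β : Type*} [Fintype α] [DecidableEq α] [Fintype β]
    (j : α) (G : (α → β) → ℝ) :
    ∑ f : α → β, ∑ b : β, G (update f j b) = Fintype.card β * ∑ f : α → β, G f := by
  set e := Equiv.funSplitAt j β
  have hupdate : ∀ f b, update f j b = e.symm (b, (e f).2) := by
    intro f b
    funext x
    by_cases hx : x = j
    · subst hx; simp [e, Equiv.funSplitAt, Equiv.piSplitAt]
    · simp [e, Equiv.funSplitAt, Equiv.piSplitAt, hx]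
  calc ∑ f, ∑ b, G (update f j b)
      = ∑ p : β × ({x // x ≠ j} → β), ∑ b, G (e.symm (b, p.2)) := by
        simp only [hupdate]
        exact e.sum_comp fun p => ∑ b, G (e.symm (b, p.2))
    _ = Fintype.card β * ∑ g : {x // x ≠ j} → β, ∑ b, G (e.symm (b, g)) := by
        simp only [Fintype.sum_prod_type, sum_const, card_univ, nsmul_eq_mul]
    _ = Fintype.card β * ∑ f, G f := by
        rw [sum_comm, ← Fintype.sum_prod_type' fun b g => G (e.symm (b, g)),
          e.symm.sum_comp G]

lemma sum_sum_sum_sum_update_eq_card_mul {ι α β : Type*} [Fintype ι] [DecidableEq ι]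
    [Fintype α] [Fintype β] (j : ι) (G : (ι → α) → (ι → β) → ℝ) :
    ∑ f, ∑ g, ∑ b, ∑ a, G (update f j a) (update g j b) =
      (Fintype.card α * Fintype.card β) * ∑ f, ∑ g, G f g := by
  calc ∑ f, ∑ g, ∑ b, ∑ a, G (update f j a) (update g j b)
      = ∑ f, Fintype.card β * ∑ g, ∑ a, G (update f j a) g :=
        sum_congr rfl fun f _ => sum_sum_update_eq_card_mul j fun g => ∑ a, G (update f j a) g
    _ = Fintype.card β * ∑ g, Fintype.card α * ∑ f, G f g := by
        rw [← mul_sum, sum_comm]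
        exact congrArg _ (sum_congr rfl fun g _ => sum_sum_update_eq_card_mul j fun f => G f g)
    _ = (Fintype.card α * Fintype.card β) * ∑ f, ∑ g, G f g := by
        rw [← mul_sum, sum_comm]
        ring

section TowerProperty

variable (P : HumanModel T H M) (Q : MachinePolicy T H M)

noncomputable def initProb (k : ℕ) (h : Fin T → H) (m : Fin T → M) : ℝ :=
  ∏ t ∈ initSteps T k, P.p t h m (h t) * Q.q t h m (m t)

/-- The conditional expectation of `φ` given the first `T - k` steps of `(h, m)`. -/
noncomputable def tailExpect (φ : (Fin T → H) → (Fin T → M) → ℝ) :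
    ℕ → (Fin T → H) → (Fin T → M) → ℝ
  | 0, h, m => φ h m
  | k + 1, h, m => ∑ b, ∑ a,
      Q.q (stepFromEnd T k) h m b * P.p (stepFromEnd T k) h (update m (stepFromEnd T k) b) a *
        tailExpect φ k (update h (stepFromEnd T k) a) (update m (stepFromEnd T k) b)

lemma tailExpect_congr (φ : (Fin T → H) → (Fin T → M) → ℝ) {k : ℕ} (hk : k ≤ T)
    {h h' : Fin T → H} {m m' : Fin T → M} (hh : ∀ s ∈ initSteps T k, h s = h' s)
    (hm : ∀ s ∈ initSteps T k, m s = m' s) :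
    tailExpect P Q φ k h m = tailExpect P Q φ k h' m' := by
  induction k generalizing h h' m m' with
  | zero =>
    have hh : h = h' := funext fun s => hh s (by simp [initSteps_zero])
    have hm : m = m' := funext fun s => hm s (by simp [initSteps_zero])
    rw [hh, hm]
  | succ k ih =>
    have hk' : k < T := hk
    set t₀ := stepFromEnd T k
    have hh₀ : ∀ s < t₀, h s = h' s := fun s hs => hh s (mem_initSteps_succ.mpr hs)
    have hm₀ : ∀ s < t₀, m s = m' s := fun s hs => hm s (mem_initSteps_succ.mpr hs)
    have hm₀' : ∀ b, ∀ s ≤ t₀, update m t₀ b s = update m' t₀ b s := by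
      intro b s hs
      rcases hs.lt_or_eq with hs | rfl
      · rw [update_of_ne hs.ne, update_of_ne hs.ne, hm₀ s hs]
      · simp only [update_self]
    refine sum_congr rfl fun b _ => sum_congr rfl fun a _ => ?_
    rw [Q.causal t₀ h h' m m' hh₀ hm₀, P.causal t₀ h h' _ _ hh₀ (hm₀' b),
      ih hk'.le (update_stepFromEnd_eqOn_initSteps hk' hh a)
        (update_stepFromEnd_eqOn_initSteps hk' hm b)]

lemma initProb_update {k : ℕ} (hk : k < T) (h : Fin T → H) (m : Fin T → M) (a : H) (b : M) :
    initProb P Q k (update h (stepFromEnd T k) a) (update m (stepFromEnd T k) b) =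
      initProb P Q (k + 1) h m * (Q.q (stepFromEnd T k) h m b *
        P.p (stepFromEnd T k) h (update m (stepFromEnd T k) b) a) := by
  rw [initProb, initSteps_eq_insert hk, prod_insert (stepFromEnd_notMem_initSteps_succ k),
    mul_comm, initProb, update_self, update_self, P.p_update_self,
    Q.q_update_of_le le_rfl, mul_comm (P.p _ _ _ a)]
  congr 1
  refine prod_congr rfl fun t ht => ?_
  have hlt := mem_initSteps_succ.mp ht
  rw [P.p_update_of_lt hlt, Q.q_update_of_le hlt.le, update_of_ne hlt.ne, update_of_ne hlt.ne]

/-- Both sides leave the last `k` coordinates free, which accounts for the factor. -/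
lemma sum_initProb_mul_tailExpect (φ : (Fin T → H) → (Fin T → M) → ℝ) {k : ℕ} (hk : k ≤ T) :
    ∑ h, ∑ m, initProb P Q k h m * tailExpect P Q φ k h m =
      (Fintype.card H * Fintype.card M) ^ k * expVal P Q φ := by
  induction k with
  | zero =>
    simp only [pow_zero, one_mul, expVal, jointPMF, HumanModel.cc, MachinePolicy.cc, initProb,
      initSteps_zero, prod_mul_distrib, tailExpect]
  | succ k ih =>
    have hk' : k < T := hk
    calc ∑ h, ∑ m, initProb P Q (k + 1) h m * tailExpect P Q φ (k + 1) h m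
        = ∑ h, ∑ m, ∑ b, ∑ a,
            initProb P Q k (update h (stepFromEnd T k) a) (update m (stepFromEnd T k) b) *
              tailExpect P Q φ k (update h (stepFromEnd T k) a)
                (update m (stepFromEnd T k) b) := by
          simp only [tailExpect, mul_sum, initProb_update P Q hk', mul_assoc]
      _ = (Fintype.card H * Fintype.card M) ^ (k + 1) * expVal P Q φ := by
          rw [sum_sum_sum_sum_update_eq_card_mul (stepFromEnd T k)
            fun h m => initProb P Q k h m * tailExpect P Q φ k h m, ih hk'.le]
          ring

lemma expVal_eq_tailExpect [Nonempty H] [Nonempty M] (φ : (Fin T → H) → (Fin T → M) → ℝ)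
    (h : Fin T → H) (m : Fin T → M) : expVal P Q φ = tailExpect P Q φ T h m := by
  have hconst : ∀ h' m', tailExpect P Q φ T h' m' = tailExpect P Q φ T h m := fun _ _ =>
    tailExpect_congr P Q φ le_rfl (by simp [initSteps_self]) (by simp [initSteps_self])
  have hsum := sum_initProb_mul_tailExpect P Q φ (le_refl T)
  simp only [initProb, initSteps_self, prod_empty, one_mul, hconst, sum_const, card_univ,
    Fintype.card_fun, Fintype.card_fin, nsmul_eq_mul, Nat.cast_pow] at hsum
  have hcard : ((Fintype.card H * Fintype.card M : ℝ)) ^ T ≠ 0 := by positivity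
  exact (mul_left_cancel₀ hcard (by rw [← hsum]; ring)).symm

end TowerProperty

noncomputable def MachinePolicy.initLogLoss {T : ℕ} {H M : Type*} [Fintype M]
    (Q : MachinePolicy T H M) (k : ℕ) (h : Fin T → H) (m : Fin T → M) : ℝ :=
  ∑ t ∈ initSteps T k, -Real.log (Q.q t h m (m t))

lemma MachinePolicy.initLogLoss_update {T : ℕ} [NeZero T] {H M : Type*} [Fintype M]
    (Q : MachinePolicy T H M) {k : ℕ} (hk : k < T)
    (h : Fin T → H) (m : Fin T → M) (a : H) (b : M) :
    Q.initLogLoss k (update h (stepFromEnd T k) a) (update m (stepFromEnd T k) b) =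
      Q.initLogLoss (k + 1) h m - Real.log (Q.q (stepFromEnd T k) h m b) := by
  rw [initLogLoss, initSteps_eq_insert hk, sum_insert (stepFromEnd_notMem_initSteps_succ k),
    update_self, Q.q_update_of_le le_rfl, initLogLoss, neg_add_eq_sub]
  congr 1
  refine sum_congr rfl fun t ht => ?_
  have hlt := mem_initSteps_succ.mp ht
  rw [Q.q_update_of_le hlt.le, update_of_ne hlt.ne]

section OptimalPolicy

variable (P : HumanModel T H M) (r : (Fin T → H) → (Fin T → M) → ℝ) (γ : ℝ)

/-- `logY P r γ k h m` is the paper's `log Y_γ(h^t, m^t)` at `t = T - k`, extended by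
`log Y_γ(h^T, m^T) := γ · r(h^T, m^T)`. -/
noncomputable def logY : ℕ → (Fin T → H) → (Fin T → M) → ℝ
  | 0, h, m => γ * r h m
  | k + 1, h, m => Real.log (∑ b, Yaux P r γ k h (update m (stepFromEnd T k) b))

lemma Yaux_pos (k : ℕ) (h : Fin T → H) (m : Fin T → M) : 0 < Yaux P r γ k h m := by
  cases k <;> exact Real.exp_pos _

lemma log_Yaux (k : ℕ) (h : Fin T → H) (m : Fin T → M) :
    Real.log (Yaux P r γ k h m) =
      ∑ a, P.p (stepFromEnd T k) h m a * logY P r γ k (update h (stepFromEnd T k) a) m := by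
  cases k with
  | zero =>
    simp only [Yaux, Real.log_exp, mul_sum, logY, stepFromEnd_eq_mk, mul_left_comm γ]
    rfl
  | succ k =>
    simp only [Yaux, Real.log_exp, logY, stepFromEnd_eq_mk]

lemma logY_self (h : Fin T → H) (m : Fin T → M) :
    logY P r γ T h m = Real.log (∑ b, Ycond P r γ 0 h (update m 0 b)) := by
  obtain ⟨n, rfl⟩ : ∃ n, T = n + 1 := Nat.exists_eq_succ_of_ne_zero (NeZero.ne T)
  have hzero : stepFromEnd (n + 1) n = 0 := Fin.ext (by simp [stepFromEnd])
  simp only [logY, Ycond, Fin.val_zero, Nat.add_sub_cancel, Nat.sub_zero, hzero]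

variable {P r γ} {Q : MachinePolicy T H M}

lemma IsOptMachine.q_pos [Nonempty M] (hQ : IsOptMachine P r γ Q) (t : Fin T) (h : Fin T → H)
    (m : Fin T → M) (b : M) : 0 < Q.q t h m b := by
  rw [hQ]
  exact div_pos (Yaux_pos P r γ _ _ _) (sum_pos (fun _ _ => Yaux_pos P r γ _ _ _) univ_nonempty)

lemma IsOptMachine.log_q [Nonempty M] (hQ : IsOptMachine P r γ Q) {k : ℕ} (hk : k < T)
    (h : Fin T → H) (m : Fin T → M) (b : M) :
    Real.log (Q.q (stepFromEnd T k) h m b) =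
      Real.log (Yaux P r γ k h (update m (stepFromEnd T k) b)) - logY P r γ (k + 1) h m := by
  have hidx : T - 1 - (stepFromEnd T k).val = k := by simp only [stepFromEnd]; omega
  rw [hQ]
  simp only [Ycond, hidx]
  rw [Real.log_div (Yaux_pos P r γ _ _ _).ne'
    (sum_pos (fun _ _ => Yaux_pos P r γ _ _ _) univ_nonempty).ne', logY]

end OptimalPolicy

lemma IsOptMachine.tailExpect_eq [Nonempty M] {P : HumanModel T H M}
    {r : (Fin T → H) → (Fin T → M) → ℝ} {γ : ℝ} {Q : MachinePolicy T H M}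
    (hQ : IsOptMachine P r γ Q) {k : ℕ} (hk : k ≤ T) (h : Fin T → H) (m : Fin T → M) :
    tailExpect P Q (fun h m => -Real.log (Q.cc h m) + γ * r h m) k h m =
      Q.initLogLoss k h m + logY P r γ k h m := by
  induction k generalizing h m with
  | zero =>
    rw [tailExpect, MachinePolicy.cc, Real.log_prod fun t _ => (hQ.q_pos t h m (m t)).ne',
      MachinePolicy.initLogLoss, initSteps_zero, sum_neg_distrib, logY]
  | succ k ih =>
    have hk' : k < T := hk
    have hstep : ∀ b, ∑ a, P.p (stepFromEnd T k) h (update m (stepFromEnd T k) b) a *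
        tailExpect P Q (fun h m => -Real.log (Q.cc h m) + γ * r h m) k
          (update h (stepFromEnd T k) a) (update m (stepFromEnd T k) b) =
        Q.initLogLoss (k + 1) h m + logY P r γ (k + 1) h m := by
      intro b
      simp only [ih hk'.le, Q.initLogLoss_update hk', mul_add, sum_add_distrib, ← sum_mul,
        P.sum_one, one_mul]
      rw [← log_Yaux, hQ.log_q hk']
      ring
    simp only [tailExpect, mul_assoc, ← mul_sum, hstep, ← sum_mul, Q.sum_one, one_mul]

theorem optMachine_value_eq_log_partition_general [Nonempty H] [Nonempty M]
    (Phat : HumanModel T H M) (r : (Fin T → H) → (Fin T → M) → ℝ)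
    (γ : ℝ)
    (Qhat : MachinePolicy T H M) (hQhat : IsOptMachine Phat r γ Qhat) :
    expVal Phat Qhat (fun h m => - Real.log (Qhat.cc h m) + γ * r h m) =
      Real.log (∑ b : M, Ycond Phat r γ 0 (Classical.arbitrary _)
        (Function.update (Classical.arbitrary (Fin T → M)) 0 b)) := by
  rw [expVal_eq_tailExpect Phat Qhat _ (Classical.arbitrary _) (Classical.arbitrary _),
    hQhat.tailExpect_eq le_rfl, MachinePolicy.initLogLoss, initSteps_self, sum_empty, zero_add,
    logY_self]

/-- log-partition value of the optimal machine policy: the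
entropy-regularized expected reward of `Q̂` under `P̂` equals the logarithm of the
partition value `Σ_{m_1} Y_γ(m_1)` of the backward recursion:
`E_{P̂Q̂}[−log Q̂(M^T‖H^T) + γ·r(H^T,M^T)] = log Σ_{m_1} Y_γ(m_1)`. -/
theorem optMachine_value_eq_log_partition [Nonempty H] [Nonempty M]
    (Phat : HumanModel T H M) (r : (Fin T → H) → (Fin T → M) → ℝ)
    (γ : ℝ) (hγ : 0 < γ)
    (Qhat : MachinePolicy T H M) (hQhat : IsOptMachine Phat r γ Qhat) :
    expVal Phat Qhat (fun h m => - Real.log (Qhat.cc h m) + γ * r h m) =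
      Real.log (∑ b : M, Ycond Phat r γ 0 (Classical.arbitrary _)
        (Function.update (Classical.arbitrary (Fin T → M)) 0 b)) :=
  optMachine_value_eq_log_partition_general Phat r γ Qhat hQhat
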